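/- arXiv:1807.10863 — 3 statements merged into one kernel-verified Lean document; each statement's English description precedes it below -/
import Mathlib

section
/- Let n ≥ 2, let α be a nonzero real number, let λ = (λ_1,…,λ_n) ∈ ℤⁿ be strongly dominant (λ_1 > λ_2 > … > λ_n), and let μ = (μ_1,…,μ_n) ∈ ℤⁿ be dominant (μ_1 ≥ … ≥ μ_n). Assume that the matrix B_{λ,μ} is invertible. Then the set O^G_{(U_λ,α)} ∩ pr⁻¹(O^K_{U_μ}) is either empty or consists of a single U(n)-orbit under the action k·(M,v) = (k M k*, k v); that is, n(O^G_{(λ,α)}, O^K_μ) ≤ 1. (Theorem 3.) -/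
/-!
Both points lie over the `U(n)`-orbit of `U_μ`, so with `c = iα/2` the matrices
`U_λ + c zz*` and `U_λ + c ww*` both have the characteristic polynomial of `U_μ`. By the matrix
determinant lemma, this polynomial evaluated at `iλ_j` equals `-c |z_j|² ∏_{k ≠ j} i(λ_j - λ_k)`;
as the `λ_k` are distinct, `|z_j| = |w_j|` for every `j`. A diagonal unitary `D` with `Dz = w`
commutes with `U_λ`, and `k' D k*` carries the first point to the second.
-/

open Matrix Complex Finset

/-- The outer matrix `z w*` with `(l,j)` entry `z l * conj (w j)`. -/
noncomputable def outerMat {n : ℕ} (z w : Fin n → ℂ) : Matrix (Fin n) (Fin n) ℂ :=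
  Matrix.of fun l j => z l * (starRingEnd ℂ) (w j)

/-- The generic coadjoint orbit `O^G_{(U,α)}` of the Heisenberg motion group,
realized in `M_n(ℂ) × ℂⁿ`. -/
noncomputable def genOrbit {n : ℕ} (U : Matrix (Fin n) (Fin n) ℂ) (α : ℝ) :
    Set (Matrix (Fin n) (Fin n) ℂ × (Fin n → ℂ)) :=
  {p | ∃ k : Matrix.unitaryGroup (Fin n) ℂ, ∃ z : Fin n → ℂ,
    p = ((k : Matrix (Fin n) (Fin n) ℂ) *
          (U + ((Complex.I * (α : ℂ)) / 2) • outerMat z z) *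
          star (k : Matrix (Fin n) (Fin n) ℂ),
        (α : ℂ) • (k : Matrix (Fin n) (Fin n) ℂ).mulVec z)}

/-- `pr⁻¹(O^K_X)` realized in `M_n(ℂ) × ℂⁿ`. -/
noncomputable def prInv {n : ℕ} (X : Matrix (Fin n) (Fin n) ℂ) :
    Set (Matrix (Fin n) (Fin n) ℂ × (Fin n → ℂ)) :=
  {p | ∃ A : Matrix.unitaryGroup (Fin n) ℂ,
    p.1 = (A : Matrix (Fin n) (Fin n) ℂ) * X * star (A : Matrix (Fin n) (Fin n) ℂ)}

/-- `U_λ = i diag(λ)`. -/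
noncomputable def Umat {n : ℕ} (lam : Fin n → ℤ) : Matrix (Fin n) (Fin n) ℂ :=
  Complex.I • Matrix.diagonal fun i => ((lam i : ℤ) : ℂ)

/-- The matrix `B_{λ,μ}` with `(i,j)` entry `∏_{k ≠ j} (μ_i − λ_k)`. -/
noncomputable def Bmat {n : ℕ} (lam mu : Fin n → ℤ) : Matrix (Fin n) (Fin n) ℝ :=
  Matrix.of fun i j => ∏ k ∈ Finset.univ.erase j, ((mu i : ℝ) - (lam k : ℝ))

namespace Matrix

section DeterminantLemma

variable {𝕜 : Type*} {n : Type*} [Fintype n] [DecidableEq n]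

theorem det_add_vecMulVec_of_isUnit [CommRing 𝕜] {A : Matrix n n 𝕜} (hA : IsUnit A.det)
    (u v : n → 𝕜) : (A + vecMulVec u v).det = A.det + v ⬝ᵥ adjugate A *ᵥ u := by
  rw [vecMulVec_eq Unit, det_add_replicateCol_mul_replicateRow hA, det_unique (1 + _)]
  simp only [inv_def, Matrix.mul_smul, Matrix.smul_mul, Matrix.add_apply, Matrix.smul_apply,
    one_apply_eq, smul_eq_mul, mul_add, mul_one, Ring.mul_inverse_cancel_left _ _ hA,
    dotProduct_mulVec]
  rfl

variable [NontriviallyNormedField 𝕜]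

theorem det_add_vecMulVec (A : Matrix n n 𝕜) (u v : n → 𝕜) :
    (A + vecMulVec u v).det = A.det + v ⬝ᵥ adjugate A *ᵥ u := by
  -- Replace `A` by `A + t • 1`: both sides are continuous in `t`, and the invertible case applies
  -- to all but finitely many `t`.
  have hdense : Dense {t : 𝕜 | IsUnit (A + t • 1).det} := by
    have hset : {t : 𝕜 | IsUnit (A + t • 1).det} = Set.univ \ {t | (charpoly (-A)).IsRoot t} := by
      ext t
      simp [eval_charpoly, isUnit_iff_ne_zero, add_comm, smul_one_eq_diagonal]
    rw [hset]
    exact dense_univ.sdiff_finite (Polynomial.finite_setOfPred_isRoot (charpoly_monic _).ne_zero)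
  have hext := Continuous.ext_on hdense (f := fun t => (A + t • 1 + vecMulVec u v).det)
    (g := fun t => (A + t • 1).det + v ⬝ᵥ adjugate (A + t • 1) *ᵥ u)
    (by fun_prop) (by fun_prop) fun t ht => det_add_vecMulVec_of_isUnit ht u v
  simpa using congrFun hext 0

theorem det_diagonal_add_vecMulVec (d u v : n → 𝕜) :
    (diagonal d + vecMulVec u v).det = ∏ i, d i + ∑ i, u i * v i * ∏ j ∈ univ.erase i, d j := by
  rw [det_add_vecMulVec, det_diagonal, adjugate_diagonal]
  simp only [dotProduct, mulVec_diagonal]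
  congr 1
  exact sum_congr rfl fun i _ => by ring

theorem eval_charpoly_diagonal_add_vecMulVec (d u v : n → 𝕜) (x : 𝕜) :
    (diagonal d + vecMulVec u v).charpoly.eval x
      = ∏ i, (x - d i) - ∑ i, u i * v i * ∏ j ∈ univ.erase i, (x - d j) := by
  have hchar : scalar n x - (diagonal d + vecMulVec u v)
      = diagonal (fun i => x - d i) + vecMulVec (-u) v := by
    ext i j
    rcases eq_or_ne i j with rfl | h
    · simp only [sub_apply, add_apply, scalar_apply, diagonal_apply_eq, vecMulVec_apply,
        Pi.neg_apply]
      ring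
    · simp [h, sub_eq_add_neg]
  rw [eval_charpoly, hchar, det_diagonal_add_vecMulVec]
  simp [sub_eq_add_neg]

/-- Evaluating at the eigenvalue `d i` of `diagonal d` kills every term but the `i`-th. -/
theorem mul_eq_of_charpoly_diagonal_add_vecMulVec_eq {d : n → 𝕜} (hd : Function.Injective d)
    {u v u' v' : n → 𝕜}
    (h : (diagonal d + vecMulVec u v).charpoly = (diagonal d + vecMulVec u' v').charpoly)
    (i : n) : u i * v i = u' i * v' i := by
  have heval : ∀ u v : n → 𝕜, (diagonal d + vecMulVec u v).charpoly.eval (d i)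
      = -(u i * v i * ∏ j ∈ univ.erase i, (d i - d j)) := by
    intro u v
    rw [eval_charpoly_diagonal_add_vecMulVec, prod_eq_zero (mem_univ i) (sub_self _), zero_sub,
      sum_eq_single i (fun j _ hji => by rw [prod_eq_zero (mem_erase.2 ⟨Ne.symm hji, mem_univ i⟩)
        (sub_self _), mul_zero]) (by simp)]
  have hP : ∏ j ∈ univ.erase i, (d i - d j) ≠ 0 :=
    prod_ne_zero_iff.2 fun j hj => sub_ne_zero.2 (hd.ne (mem_erase.1 hj).1.symm)
  have hev := heval u v
  rw [h, heval u' v', neg_inj] at hev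
  exact (mul_right_cancel₀ hP hev).symm

end DeterminantLemma

section Conjugation

variable {R : Type*} [CommRing R] [StarRing R] {n : Type*} [Fintype n]

theorem charpoly_mul_mul_star_of_mem_unitaryGroup [DecidableEq n] {k : Matrix n n R}
    (hk : k ∈ unitaryGroup n R) (M : Matrix n n R) : (k * M * star k).charpoly = M.charpoly := by
  rw [Matrix.mul_assoc, charpoly_mul_comm, Matrix.mul_assoc, mem_unitaryGroup_iff'.1 hk,
    Matrix.mul_one]

theorem charpoly_eq_of_mul_mul_star_eq [DecidableEq n] {k A : Matrix n n R}
    (hk : k ∈ unitaryGroup n R) (hA : A ∈ unitaryGroup n R) {M X : Matrix n n R}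
    (h : k * M * star k = A * X * star A) : M.charpoly = X.charpoly := by
  rw [← charpoly_mul_mul_star_of_mem_unitaryGroup hk, h,
    charpoly_mul_mul_star_of_mem_unitaryGroup hA]

theorem mul_vecMulVec_star_mul_star (k : Matrix n n R) (u : n → R) :
    k * vecMulVec u (star u) * star k = vecMulVec (k *ᵥ u) (star (k *ᵥ u)) := by
  rw [mul_vecMulVec, vecMulVec_mul, star_mulVec, star_eq_conjTranspose]

theorem diagonal_mul_diagonal_mul_star [DecidableEq n] {φ : n → R}
    (hφ : diagonal φ ∈ unitaryGroup n R) (d : n → R) :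
    diagonal φ * diagonal d * star (diagonal φ) = diagonal d := by
  rw [diagonal_mul_diagonal, show (fun i => φ i * d i) = fun i => d i * φ i from
    funext fun i => mul_comm _ _, ← diagonal_mul_diagonal, Matrix.mul_assoc,
    mem_unitaryGroup_iff.1 hφ, Matrix.mul_one]

end Conjugation

end Matrix

theorem RCLike.exists_norm_eq_one_mul_eq {𝕜 : Type*} [RCLike 𝕜] {a b : 𝕜} (h : ‖a‖ = ‖b‖) :
    ∃ φ : 𝕜, ‖φ‖ = 1 ∧ φ * a = b := by
  rcases eq_or_ne a 0 with rfl | ha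
  · exact ⟨1, norm_one, by simpa [eq_comm] using h⟩
  · exact ⟨b / a, by rw [norm_div, ← h, div_self (norm_ne_zero_iff.2 ha)], div_mul_cancel₀ b ha⟩

namespace Matrix

variable {𝕜 : Type*} [RCLike 𝕜] {n : Type*} [Fintype n] [DecidableEq n]

theorem diagonal_mem_unitaryGroup {φ : n → 𝕜} (h : ∀ i, ‖φ i‖ = 1) :
    diagonal φ ∈ unitaryGroup n 𝕜 := by
  rw [mem_unitaryGroup_iff, star_eq_conjTranspose, diagonal_conjTranspose, diagonal_mul_diagonal,
    ← diagonal_one]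
  congr 1
  ext i
  simp [RCLike.mul_conj, h i]

theorem exists_diagonal_mem_unitaryGroup_mulVec_eq {z w : n → 𝕜} (h : ∀ i, ‖z i‖ = ‖w i‖) :
    ∃ φ : n → 𝕜, diagonal φ ∈ unitaryGroup n 𝕜 ∧ diagonal φ *ᵥ z = w := by
  choose φ hφ hφz using fun i => RCLike.exists_norm_eq_one_mul_eq (h i)
  exact ⟨φ, diagonal_mem_unitaryGroup hφ, funext fun i => (mulVec_diagonal _ _ _).trans (hφz i)⟩

end Matrix

def unitaryAct {R : Type*} [CommRing R] [StarRing R] {n : Type*} [Fintype n]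
    (k : Matrix n n R) (p : Matrix n n R × (n → R)) : Matrix n n R × (n → R) :=
  (k * p.1 * star k, k *ᵥ p.2)

section UnitaryAct

variable {R : Type*} [CommRing R] [StarRing R] {n : Type*} [Fintype n]

theorem unitaryAct_mul (k l : Matrix n n R) (p : Matrix n n R × (n → R)) :
    unitaryAct (k * l) p = unitaryAct k (unitaryAct l p) := by
  simp only [unitaryAct, star_mul, Matrix.mul_assoc, mulVec_mulVec]

theorem unitaryAct_mul_star [DecidableEq n] {k : Matrix n n R} (hk : k ∈ unitaryGroup n R)
    (l : Matrix n n R) (p : Matrix n n R × (n → R)) :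
    unitaryAct (l * star k) (unitaryAct k p) = unitaryAct l p := by
  rw [← unitaryAct_mul, Matrix.mul_assoc, mem_unitaryGroup_iff'.1 hk, Matrix.mul_one]

end UnitaryAct

section HeisenbergMotionGroup

variable {n : ℕ}

theorem mem_genOrbit {U : Matrix (Fin n) (Fin n) ℂ} {α : ℝ}
    {p : Matrix (Fin n) (Fin n) ℂ × (Fin n → ℂ)} :
    p ∈ genOrbit U α ↔ ∃ k : unitaryGroup (Fin n) ℂ, ∃ z : Fin n → ℂ,
      p = unitaryAct (k : Matrix (Fin n) (Fin n) ℂ)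
        (U + ((I * α) / 2) • outerMat z z, (α : ℂ) • z) := by
  simp only [genOrbit, unitaryAct, mulVec_smul, Set.mem_ofPred_eq]

theorem Umat_add_smul_outerMat (lam : Fin n → ℤ) (c : ℂ) (z : Fin n → ℂ) :
    Umat lam + c • outerMat z z = diagonal (fun i => I * lam i) + c • vecMulVec z (star z) := by
  ext i j
  by_cases h : i = j <;> simp [Umat, outerMat, h, vecMulVec_apply]

theorem norm_eq_of_charpoly_Umat_add_smul_outerMat_eq {lam : Fin n → ℤ}
    (hlam : Function.Injective lam) {c : ℂ} (hc : c ≠ 0) {z w : Fin n → ℂ}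
    (h : (Umat lam + c • outerMat z z).charpoly = (Umat lam + c • outerMat w w).charpoly)
    (i : Fin n) : ‖z i‖ = ‖w i‖ := by
  have hd : Function.Injective fun i => I * (lam i : ℂ) := fun i j hij => hlam <| by
    simpa [I_ne_zero] using hij
  rw [Umat_add_smul_outerMat, Umat_add_smul_outerMat, ← smul_vecMulVec, ← smul_vecMulVec] at h
  have hsq := mul_eq_of_charpoly_diagonal_add_vecMulVec_eq hd h i
  simp only [Pi.smul_apply, Pi.star_apply, smul_eq_mul, mul_assoc, RCLike.star_def,
    RCLike.mul_conj, mul_right_inj' hc] at hsq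
  exact (pow_left_inj₀ (norm_nonneg _) (norm_nonneg _) two_ne_zero).1 (by exact_mod_cast hsq)

theorem unitaryAct_diagonal_Umat_add_smul_outerMat {φ : Fin n → ℂ}
    (hφ : diagonal φ ∈ unitaryGroup (Fin n) ℂ) (lam : Fin n → ℤ) (c a : ℂ) (z : Fin n → ℂ) :
    unitaryAct (diagonal φ) (Umat lam + c • outerMat z z, a • z)
      = (Umat lam + c • outerMat (diagonal φ *ᵥ z) (diagonal φ *ᵥ z), a • diagonal φ *ᵥ z) := by
  simp only [unitaryAct, Umat_add_smul_outerMat, Matrix.mul_add, Matrix.add_mul,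
    diagonal_mul_diagonal_mul_star hφ, Matrix.mul_smul, Matrix.smul_mul,
    mul_vecMulVec_star_mul_star, mulVec_smul]

end HeisenbergMotionGroup

theorem corwinGreenleaf_le_one_of_stronglyDominant_general {n : ℕ}
    (α : ℝ) (hα : α ≠ 0)
    (lam : Fin n → ℤ) (hlam : ∀ i j : Fin n, i < j → lam j < lam i)
    (mu : Fin n → ℤ) :
    ∀ p ∈ genOrbit (Umat lam) α ∩ prInv (Umat mu),
      ∀ q ∈ genOrbit (Umat lam) α ∩ prInv (Umat mu),
        ∃ k : Matrix.unitaryGroup (Fin n) ℂ,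
          q = ((k : Matrix (Fin n) (Fin n) ℂ) * p.1 * star (k : Matrix (Fin n) (Fin n) ℂ),
               (k : Matrix (Fin n) (Fin n) ℂ).mulVec p.2) := by
  rintro p ⟨hpG, A, hpA⟩ q ⟨hqG, A', hqA⟩
  obtain ⟨k, z, rfl⟩ := mem_genOrbit.1 hpG
  obtain ⟨k', w, rfl⟩ := mem_genOrbit.1 hqG
  have hc : (I * α) / 2 ≠ 0 := by simp [hα, I_ne_zero]
  have hz := charpoly_eq_of_mul_mul_star_eq k.2 A.2 hpA
  have hw := charpoly_eq_of_mul_mul_star_eq k'.2 A'.2 hqA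
  obtain ⟨φ, hφ, rfl⟩ := exists_diagonal_mem_unitaryGroup_mulVec_eq <|
    norm_eq_of_charpoly_Umat_add_smul_outerMat_eq (StrictAnti.injective hlam) hc (hz.trans hw.symm)
  refine ⟨k' * ⟨diagonal φ, hφ⟩ * star k, ?_⟩
  change _ = unitaryAct
    ((k' : Matrix (Fin n) (Fin n) ℂ) * diagonal φ * star (k : Matrix (Fin n) (Fin n) ℂ))
    (unitaryAct (k : Matrix (Fin n) (Fin n) ℂ) _)
  rw [unitaryAct_mul_star k.2, unitaryAct_mul, unitaryAct_diagonal_Umat_add_smul_outerMat hφ]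

/-- Theorem 3: if `λ` is strongly dominant and `B_{λ,μ}` is
invertible, then `O^G_{(U_λ,α)} ∩ pr⁻¹(O^K_{U_μ})` is either empty or a single
`U(n)`-orbit, i.e. `n(O^G_{(λ,α)}, O^K_μ) ≤ 1`. -/
theorem corwinGreenleaf_le_one_of_stronglyDominant {n : ℕ} (hn : 2 ≤ n)
    (α : ℝ) (hα : α ≠ 0)
    (lam : Fin n → ℤ) (hlam : ∀ i j : Fin n, i < j → lam j < lam i)
    (mu : Fin n → ℤ) (hmu : ∀ i j : Fin n, i ≤ j → mu j ≤ mu i)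
    (hB : IsUnit (Bmat lam mu).det) :
    ∀ p ∈ genOrbit (Umat lam) α ∩ prInv (Umat mu),
      ∀ q ∈ genOrbit (Umat lam) α ∩ prInv (Umat mu),
        ∃ k : Matrix.unitaryGroup (Fin n) ℂ,
          q = ((k : Matrix (Fin n) (Fin n) ℂ) * p.1 * star (k : Matrix (Fin n) (Fin n) ℂ),
               (k : Matrix (Fin n) (Fin n) ℂ).mulVec p.2) :=
  corwinGreenleaf_le_one_of_stronglyDominant_general α hα lam hlam mu
end

section
/- Let n ≥ 2, let α be a nonzero real number, let a ∈ ℤ, let λ = (a,…,a) ∈ ℤⁿ, and let μ = (μ_1,…,μ_n) ∈ ℤⁿ be dominant (μ_1 ≥ … ≥ μ_n) with μ ≠ λ. Then the set O^G_{(U_λ,α)} ∩ pr⁻¹(O^K_{U_μ}) is either empty or consists of a single U(n)-orbit under the action k·(M,v) = (k M k*, k v); that is, n(O^G_{(λ,α)}, O^K_μ) ≤ 1. (First assertion of Theorem 4.) -/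
/-! Because `U_λ = i a · 1` is scalar, every point of `O^G_{(U_λ,α)}` has the form
`(U_λ + (iα/2) w w*, α w)`, and the `U(n)`-action just moves `w` to `k w`. Membership in
`pr⁻¹(O^K_{U_μ})` fixes the trace, hence `(iα/2) ‖w‖²`; and since `U_μ` is not conjugate to the
scalar `U_λ`, the coefficient `iα/2` is nonzero, so `‖w‖` is the same for all points of the
intersection. `U(n)` is transitive on each sphere of `ℂⁿ`, which gives a single orbit. -/

open Matrix Complex Finset

theorem exists_linearIsometryEquiv_apply_eq {𝕜 E : Type*} [RCLike 𝕜] [NormedAddCommGroup E]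
    [InnerProductSpace 𝕜 E] [FiniteDimensional 𝕜 E] {x y : E} (h : ‖x‖ = ‖y‖) :
    ∃ f : E ≃ₗᵢ[𝕜] E, f x = y := by
  rcases eq_or_ne x 0 with rfl | hx
  · exact ⟨LinearIsometryEquiv.refl 𝕜 E, by simpa [eq_comm] using h⟩
  have hy : y ≠ 0 := norm_ne_zero_iff.1 (h ▸ norm_ne_zero_iff.2 hx)
  have hd : 0 < Module.finrank 𝕜 E := Module.finrank_pos_iff_exists_ne_zero.2 ⟨x, hx⟩
  let i₀ : Fin (Module.finrank 𝕜 E) := ⟨0, hd⟩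
  have extend : ∀ v : E, ‖v‖ = 1 →
      ∃ b : OrthonormalBasis (Fin (Module.finrank 𝕜 E)) 𝕜 E, b i₀ = v := fun v hv =>
    have ⟨b, hb⟩ := Orthonormal.exists_orthonormalBasis_extension_of_card_eq
      (v := fun _ => v) (s := {i₀}) (by simp) (by simpa [orthonormal_subsingleton_iff] using hv)
    ⟨b, hb i₀ rfl⟩
  obtain ⟨b, hb⟩ := extend _ (norm_smul_inv_norm (𝕜 := 𝕜) hx)
  obtain ⟨b', hb'⟩ := extend _ (norm_smul_inv_norm (𝕜 := 𝕜) hy)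
  refine ⟨b.repr.trans b'.repr.symm, ?_⟩
  have hbb' : b.repr.trans b'.repr.symm (b i₀) = b' i₀ := by simp
  rw [hb, hb', map_smul, h] at hbb'
  exact smul_right_injective E (by simpa using hy) hbb'

theorem Matrix.exists_mem_unitaryGroup_mulVec_eq {𝕜 ι : Type*} [RCLike 𝕜] [Fintype ι]
    [DecidableEq ι] {v w : ι → 𝕜} (h : v ⬝ᵥ star v = w ⬝ᵥ star w) :
    ∃ k ∈ unitaryGroup ι 𝕜, k *ᵥ v = w := by
  have hnorm : ‖WithLp.toLp 2 v‖ = ‖WithLp.toLp 2 w‖ := by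
    rw [← EuclideanSpace.inner_toLp_toLp, ← EuclideanSpace.inner_toLp_toLp] at h
    simpa [inner_self_eq_norm_sq] using congrArg RCLike.re h
  obtain ⟨f, hf⟩ := exists_linearIsometryEquiv_apply_eq (𝕜 := 𝕜) hnorm
  let e := EuclideanSpace.basisFun ι 𝕜
  refine ⟨LinearMap.toMatrix e.toBasis e.toBasis f.toLinearMap, f.toMatrix_mem_unitaryGroup e e, ?_⟩
  have hmat : toEuclideanLin (LinearMap.toMatrix e.toBasis e.toBasis f.toLinearMap) =
      f.toLinearMap := by
    rw [toEuclideanLin_eq_toLin_orthonormal, toLin_toMatrix]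
  simpa [hf] using congrArg WithLp.ofLp (LinearMap.congr_fun hmat (WithLp.toLp 2 v))

theorem Matrix.mul_smul_one_mul_star {R ι : Type*} [CommRing R] [StarRing R] [Fintype ι]
    [DecidableEq ι] {k : Matrix ι ι R} (hk : k ∈ unitaryGroup ι R) (s : R) :
    k * (s • 1) * star k = s • 1 := by
  rw [Matrix.mul_smul, mul_one, Matrix.smul_mul, mem_unitaryGroup_iff.1 hk]

theorem Matrix.trace_mul_mul_star {R ι : Type*} [CommRing R] [StarRing R] [Fintype ι]
    [DecidableEq ι] {k : Matrix ι ι R} (hk : k ∈ unitaryGroup ι R) (M : Matrix ι ι R) :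
    (k * M * star k).trace = M.trace := by
  rw [trace_mul_cycle, mem_unitaryGroup_iff'.1 hk, one_mul]

theorem Matrix.eq_smul_one_of_mul_mul_star_eq {R ι : Type*} [CommRing R] [StarRing R]
    [Fintype ι] [DecidableEq ι] {k M : Matrix ι ι R} (hk : k ∈ unitaryGroup ι R) {s : R}
    (h : k * M * star k = s • 1) : M = s • 1 := by
  have hkk : star k * k = 1 := mem_unitaryGroup_iff'.1 hk
  calc M = star k * (k * M * star k) * star (star k) := by
        rw [star_star, ← mul_assoc, ← mul_assoc, hkk, one_mul, mul_assoc, hkk, mul_one]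
    _ = s • 1 := by rw [h, mul_smul_one_mul_star (Unitary.star_mem hk)]

theorem outerMat_eq_vecMulVec {n : ℕ} (z w : Fin n → ℂ) : outerMat z w = vecMulVec z (star w) :=
  rfl

theorem mul_outerMat_mul_star {n : ℕ} (k : Matrix (Fin n) (Fin n) ℂ) (z w : Fin n → ℂ) :
    k * outerMat z w * star k = outerMat (k *ᵥ z) (k *ᵥ w) := by
  rw [outerMat_eq_vecMulVec, outerMat_eq_vecMulVec, mul_vecMulVec, vecMulVec_mul,
    star_eq_conjTranspose, star_mulVec]

theorem trace_outerMat {n : ℕ} (z w : Fin n → ℂ) : (outerMat z w).trace = z ⬝ᵥ star w :=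
  trace_vecMulVec z (star w)

theorem Umat_const {n : ℕ} (a : ℤ) : Umat (fun _ : Fin n => a) = (I * a) • 1 := by
  ext i j
  by_cases h : i = j <;> simp [Umat, one_apply, h]

theorem Umat_injective {n : ℕ} : Function.Injective (Umat (n := n)) := by
  intro mu nu h
  funext i
  have := congrFun (congrFun h i) i
  simpa [Umat, I_ne_zero] using this

theorem trace_eq_of_mem_prInv {n : ℕ} {X : Matrix (Fin n) (Fin n) ℂ}
    {p : Matrix (Fin n) (Fin n) ℂ × (Fin n → ℂ)} (hp : p ∈ prInv X) : p.1.trace = X.trace := by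
  obtain ⟨A, hA⟩ := hp
  rw [hA, trace_mul_mul_star A.2]

theorem eq_smul_one_of_mem_prInv {n : ℕ} {X : Matrix (Fin n) (Fin n) ℂ} {s : ℂ}
    {v : Fin n → ℂ} (h : (s • 1, v) ∈ prInv X) : X = s • 1 := by
  obtain ⟨A, hA⟩ := h
  exact eq_smul_one_of_mul_mul_star_eq A.2 hA.symm

section ScalarOrbit

variable {n : ℕ} (s : ℂ) (α : ℝ)

theorem mul_smul_one_add_smul_outerMat_mul_star {k : Matrix (Fin n) (Fin n) ℂ}
    (hk : k ∈ unitaryGroup (Fin n) ℂ) (c : ℂ) (w : Fin n → ℂ) :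
    k * (s • 1 + c • outerMat w w) * star k = s • 1 + c • outerMat (k *ᵥ w) (k *ᵥ w) := by
  rw [mul_add, add_mul, mul_smul_one_mul_star hk, Matrix.mul_smul, Matrix.smul_mul,
    mul_outerMat_mul_star]

theorem mem_genOrbit_smul_one_iff {p : Matrix (Fin n) (Fin n) ℂ × (Fin n → ℂ)} :
    p ∈ genOrbit (s • 1) α ↔
      ∃ w, p = (s • 1 + (I * α / 2) • outerMat w w, (α : ℂ) • w) := by
  constructor
  · rintro ⟨k, z, rfl⟩
    refine ⟨k *ᵥ z, ?_⟩
    rw [mul_smul_one_add_smul_outerMat_mul_star s k.2]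
  · rintro ⟨w, rfl⟩
    refine ⟨1, w, ?_⟩
    simp

end ScalarOrbit

theorem corwinGreenleaf_le_one_of_scalar_general {n : ℕ}
    (α : ℝ) (a : ℤ)
    (mu : Fin n → ℤ)
    (hne : mu ≠ fun _ => a) :
    ∀ p ∈ genOrbit (Umat fun _ : Fin n => a) α ∩ prInv (Umat mu),
      ∀ q ∈ genOrbit (Umat fun _ : Fin n => a) α ∩ prInv (Umat mu),
        ∃ k : Matrix.unitaryGroup (Fin n) ℂ,
          q = ((k : Matrix (Fin n) (Fin n) ℂ) * p.1 * star (k : Matrix (Fin n) (Fin n) ℂ),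
               (k : Matrix (Fin n) (Fin n) ℂ).mulVec p.2) := by
  rintro p ⟨hpG, hpK⟩ q ⟨hqG, hqK⟩
  rw [Umat_const] at hpG hqG
  obtain ⟨w, rfl⟩ := (mem_genOrbit_smul_one_iff _ _).1 hpG
  obtain ⟨w', rfl⟩ := (mem_genOrbit_smul_one_iff _ _).1 hqG
  have hc : (I * α / 2 : ℂ) ≠ 0 := by
    intro hc
    rw [hc, zero_smul, add_zero] at hpK
    exact hne (Umat_injective ((eq_smul_one_of_mem_prInv hpK).trans (Umat_const a).symm))
  have hnorm : w ⬝ᵥ star w = w' ⬝ᵥ star w' := by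
    have hp := trace_eq_of_mem_prInv hpK
    have hq := trace_eq_of_mem_prInv hqK
    simp only [trace_add, trace_smul, trace_outerMat, smul_eq_mul] at hp hq
    exact mul_left_cancel₀ hc (add_left_cancel (hp.trans hq.symm))
  obtain ⟨k, hk, hkw⟩ := exists_mem_unitaryGroup_mulVec_eq hnorm
  refine ⟨⟨k, hk⟩, Prod.ext ?_ ?_⟩
  · rw [mul_smul_one_add_smul_outerMat_mul_star _ hk, hkw]
  · rw [mulVec_smul, hkw]

/-- first assertion of Theorem 4: if `λ = (a,…,a)` and `μ ≠ λ` is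
dominant, then `O^G_{(U_λ,α)} ∩ pr⁻¹(O^K_{U_μ})` is either empty or a single
`U(n)`-orbit, i.e. `n(O^G_{(λ,α)}, O^K_μ) ≤ 1`. -/
theorem corwinGreenleaf_le_one_of_scalar {n : ℕ} (hn : 2 ≤ n)
    (α : ℝ) (hα : α ≠ 0) (a : ℤ)
    (mu : Fin n → ℤ) (hmu : ∀ i j : Fin n, i ≤ j → mu j ≤ mu i)
    (hne : mu ≠ fun _ => a) :
    ∀ p ∈ genOrbit (Umat fun _ : Fin n => a) α ∩ prInv (Umat mu),
      ∀ q ∈ genOrbit (Umat fun _ : Fin n => a) α ∩ prInv (Umat mu),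
        ∃ k : Matrix.unitaryGroup (Fin n) ℂ,
          q = ((k : Matrix (Fin n) (Fin n) ℂ) * p.1 * star (k : Matrix (Fin n) (Fin n) ℂ),
               (k : Matrix (Fin n) (Fin n) ℂ).mulVec p.2) :=
  corwinGreenleaf_le_one_of_scalar_general α a mu hne
end

section
/- Let n ≥ 2, let α > 0 be real, and let a, b ∈ ℝ with b > a. Then { z ∈ ℂⁿ : ∃ A ∈ U(n), i·a·I + (iα/2)·zz* = A·(i·diag(b, a, …, a))·A* } = { z ∈ ℂⁿ : ‖z‖² = 2(b − a)/α }. In particular this set is nonempty, so for λ = (a,…,a) and μ = (b, a, …, a) the intersection O^G_{(U_λ,α)} ∩ pr⁻¹(O^K_{U_μ}) is nonempty, i.e. n(O^G_{(λ,α)}, O^K_μ) ≠ 0. (Sufficiency in Theorem 4, Case α > 0 with p = 1.) -/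
/-! For a unitary `A` with first column `u`, `A · diag(b, a, …, a) · A* = a·I + (b − a)·uu*`,
so the defining equation of the set reduces to `α·zz* = 2(b − a)·uu*`. Taking traces gives
`α‖z‖² = 2(b − a)`, because `‖u‖ = 1`; conversely, if `‖z‖² = 2(b − a)/α`, complete `z/‖z‖`
to a unitary matrix. Nonemptiness then only needs a vector of squared norm `2(b − a)/α ≥ 0`. -/

open Matrix Complex Finset

open ComplexConjugate

lemma trace_outerMat_self {n : ℕ} (z : Fin n → ℂ) :
    (outerMat z z).trace = ((∑ j, normSq (z j) : ℝ) : ℂ) := by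
  simp [Matrix.trace, outerMat, mul_conj]

lemma outerMat_smul_smul {n : ℕ} (c d : ℂ) (z w : Fin n → ℂ) :
    outerMat (c • z) (d • w) = (c * conj d) • outerMat z w := by
  ext l j
  simp only [outerMat, of_apply, Matrix.smul_apply, Pi.smul_apply, smul_eq_mul, map_mul]
  ring

lemma sum_normSq_eq_one_of_mem_unitaryGroup {ι : Type*} [Fintype ι] [DecidableEq ι]
    {A : Matrix ι ι ℂ} (hA : A ∈ unitaryGroup ι ℂ) (i : ι) :
    ∑ l, normSq (A l i) = 1 := by
  have h := congrFun (congrFun (mem_unitaryGroup_iff'.mp hA) i) i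
  rw [mul_apply, one_apply_eq] at h
  simp_rw [star_apply, Complex.star_def, mul_comm, mul_conj] at h
  exact_mod_cast h

lemma exists_mem_unitaryGroup_col_eq {𝕜 ι : Type*} [RCLike 𝕜] [Fintype ι] [DecidableEq ι]
    (i : ι) {v : EuclideanSpace 𝕜 ι} (hv : ‖v‖ = 1) :
    ∃ A ∈ unitaryGroup ι 𝕜, ∀ l, A l i = v l := by
  have hsingle : Orthonormal 𝕜 (({i} : Set ι).domRestrict fun _ => v) := by
    rw [orthonormal_iff_ite]
    rintro ⟨j, rfl⟩ ⟨k, rfl⟩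
    simp [Set.domRestrict_apply, hv]
  obtain ⟨b, hb⟩ := hsingle.exists_orthonormalBasis_extension_of_card_eq (by simp)
  refine ⟨_, (EuclideanSpace.basisFun ι 𝕜).toMatrix_orthonormalBasis_mem_unitary b,
    fun l => ?_⟩
  simp [Module.Basis.toMatrix_apply, hb i rfl]

lemma mul_diagonal_single_mul_star {n : ℕ} (A : Matrix (Fin n) (Fin n) ℂ) (i : Fin n) (c : ℂ) :
    A * diagonal (Pi.single i c) * star A = c • outerMat (fun l => A l i) (fun l => A l i) := by
  ext l j
  rw [mul_apply]
  simp [outerMat, mul_diagonal, Pi.single_apply, star_apply]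
  ring

lemma mul_diagonal_ite_mul_star {n : ℕ} [NeZero n] {A : Matrix (Fin n) (Fin n) ℂ}
    (hA : A ∈ unitaryGroup (Fin n) ℂ) (a b : ℂ) :
    A * diagonal (fun i : Fin n => if (i : ℕ) = 0 then b else a) * star A
      = a • 1 + (b - a) • outerMat (fun l => A l 0) (fun l => A l 0) := by
  have hdiag : diagonal (fun i : Fin n => if (i : ℕ) = 0 then b else a)
      = a • 1 + diagonal (Pi.single 0 (b - a)) := by
    ext l j
    simp only [diagonal_apply, Matrix.add_apply, Matrix.smul_apply, one_apply, Pi.single_apply,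
      Fin.val_eq_zero_iff, smul_eq_mul]
    split_ifs <;> simp_all
  rw [hdiag, mul_add, add_mul, Matrix.mul_smul, mul_one, Matrix.smul_mul,
    mem_unitaryGroup_iff.mp hA, mul_diagonal_single_mul_star]

lemma sum_normSq_eq_norm_sq {ι : Type*} [Fintype ι] (z : ι → ℂ) :
    ∑ j, normSq (z j) = ‖WithLp.toLp 2 z‖ ^ 2 := by
  simp [EuclideanSpace.norm_sq_eq, normSq_eq_norm_sq]

lemma exists_mem_unitaryGroup_smul_outerMat_col {n : ℕ} (z : Fin n → ℂ) (i : Fin n) :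
    ∃ A ∈ unitaryGroup (Fin n) ℂ,
      ((∑ j, normSq (z j) : ℝ) : ℂ) • outerMat (fun l => A l i) (fun l => A l i)
        = outerMat z z := by
  rcases eq_or_ne z 0 with rfl | hz
  · exact ⟨1, one_mem _, by ext; simp [outerMat]⟩
  have hz' : WithLp.toLp 2 z ≠ 0 := by simpa using hz
  obtain ⟨A, hA, hcol⟩ := exists_mem_unitaryGroup_col_eq i (norm_smul_inv_norm (𝕜 := ℂ) hz')
  refine ⟨A, hA, ?_⟩
  have hcol' : (fun l => A l i) = ((‖WithLp.toLp 2 z‖⁻¹ : ℝ) : ℂ) • z :=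
    funext fun l => by simp [hcol]
  rw [hcol', outerMat_smul_smul, smul_smul, sum_normSq_eq_norm_sq, conj_ofReal]
  convert one_smul ℂ (outerMat z z)
  norm_cast
  field_simp [norm_ne_zero_iff.mpr hz']

lemma conj_eq_iff_smul_outerMat_eq {n : ℕ} [NeZero n] {A : Matrix (Fin n) (Fin n) ℂ}
    (hA : A ∈ unitaryGroup (Fin n) ℂ) (α a b : ℝ) (z : Fin n → ℂ) :
    (I * a) • (1 : Matrix (Fin n) (Fin n) ℂ) + ((I * α) / 2) • outerMat z z
        = A * (I • diagonal fun i : Fin n => if (i : ℕ) = 0 then (b : ℂ) else a) * star A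
      ↔ (α : ℂ) • outerMat z z
          = (2 * (b - a) : ℂ) • outerMat (fun l => A l 0) (fun l => A l 0) := by
  rw [Matrix.mul_smul, Matrix.smul_mul, mul_diagonal_ite_mul_star hA, smul_add, smul_smul,
    smul_smul, add_right_inj]
  conv_rhs => rw [← smul_right_inj (show (I / 2 : ℂ) ≠ 0 by simp), smul_smul, smul_smul]
  ring_nf

lemma exists_conj_eq_iff_sum_normSq_eq {n : ℕ} [NeZero n] {α : ℝ} (hα : α ≠ 0) (a b : ℝ)
    (z : Fin n → ℂ) :
    (∃ A : unitaryGroup (Fin n) ℂ,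
        (I * a) • (1 : Matrix (Fin n) (Fin n) ℂ) + ((I * α) / 2) • outerMat z z
          = (A : Matrix (Fin n) (Fin n) ℂ) *
              (I • diagonal fun i : Fin n => if (i : ℕ) = 0 then (b : ℂ) else a) *
              star (A : Matrix (Fin n) (Fin n) ℂ))
      ↔ ∑ j, normSq (z j) = 2 * (b - a) / α := by
  simp only [conj_eq_iff_smul_outerMat_eq (SetLike.coe_mem _)]
  constructor
  · rintro ⟨A, hA⟩
    have htrace := congrArg trace hA
    rw [trace_smul, trace_smul, trace_outerMat_self, trace_outerMat_self,
      sum_normSq_eq_one_of_mem_unitaryGroup A.2, smul_eq_mul, smul_eq_mul, ofReal_one,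
      mul_one] at htrace
    rw [eq_div_iff hα, mul_comm]
    exact_mod_cast htrace
  · intro hz
    obtain ⟨A, hA, hcol⟩ := exists_mem_unitaryGroup_smul_outerMat_col z 0
    refine ⟨⟨A, hA⟩, ?_⟩
    rw [← hcol, smul_smul, hz]
    congr 1
    push_cast
    exact mul_div_cancel₀ _ (ofReal_ne_zero.mpr hα)

lemma exists_sum_normSq_eq {ι : Type*} [Fintype ι] [DecidableEq ι] [Nonempty ι] {S : ℝ}
    (hS : 0 ≤ S) : ∃ z : ι → ℂ, ∑ j, normSq (z j) = S :=
  ⟨Pi.single (Classical.arbitrary ι) (Real.sqrt S : ℂ), by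
    simp [Pi.single_apply, apply_ite normSq, normSq_ofReal, Real.mul_self_sqrt hS]⟩

lemma mk_mem_genOrbit_inter_prInv {n : ℕ} {U X : Matrix (Fin n) (Fin n) ℂ} {α : ℝ}
    {z : Fin n → ℂ} {A : unitaryGroup (Fin n) ℂ}
    (hA : U + ((I * α) / 2) • outerMat z z
      = (A : Matrix (Fin n) (Fin n) ℂ) * X * star (A : Matrix (Fin n) (Fin n) ℂ)) :
    (U + ((I * α) / 2) • outerMat z z, (α : ℂ) • z) ∈ genOrbit U α ∩ prInv X :=
  ⟨⟨1, z, by simp⟩, A, hA⟩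

/-- sufficiency in Theorem 4, case `α > 0`, `p = 1`: for `b > a`,
`F_μ = {z : ‖z‖² = 2(b−a)/α}` where `μ = (b,a,…,a)`; in particular it is
nonempty, hence `O^G_{(U_λ,α)} ∩ pr⁻¹(O^K_{U_μ})` is nonempty for `λ = (a,…,a)`,
i.e. `n(O^G_{(λ,α)}, O^K_μ) ≠ 0`. -/
theorem Fmu_nonempty_pos {n : ℕ} (hn : 2 ≤ n) (α : ℝ) (hα : 0 < α)
    (a b : ℝ) (hab : a < b) :
    {z : Fin n → ℂ | ∃ A : Matrix.unitaryGroup (Fin n) ℂ,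
        (Complex.I * (a : ℂ)) • (1 : Matrix (Fin n) (Fin n) ℂ)
            + ((Complex.I * (α : ℂ)) / 2) • outerMat z z
          = (A : Matrix (Fin n) (Fin n) ℂ) *
              (Complex.I • Matrix.diagonal fun i : Fin n =>
                if (i : ℕ) = 0 then (b : ℂ) else (a : ℂ)) *
              star (A : Matrix (Fin n) (Fin n) ℂ)}
      = {z : Fin n → ℂ | ∑ j, Complex.normSq (z j) = 2 * (b - a) / α}
    ∧ (genOrbit ((Complex.I * (a : ℂ)) • (1 : Matrix (Fin n) (Fin n) ℂ)) α ∩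
        prInv (Complex.I • Matrix.diagonal fun i : Fin n =>
          if (i : ℕ) = 0 then (b : ℂ) else (a : ℂ))).Nonempty := by
  have : NeZero n := ⟨by omega⟩
  have hF := exists_conj_eq_iff_sum_normSq_eq (n := n) hα.ne' a b
  refine ⟨Set.ext hF, ?_⟩
  obtain ⟨z, hz⟩ := exists_sum_normSq_eq (ι := Fin n) (S := 2 * (b - a) / α)
    (div_nonneg (by linarith) hα.le)
  obtain ⟨A, hA⟩ := (hF z).2 hz
  exact ⟨_, mk_mem_genOrbit_inter_prInv hA⟩
end
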